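/- arXiv:1711.09211 — 6 statements merged into one kernel-verified Lean document; each statement's English description precedes it below -/
import Mathlib

section
/- The weighted boundary map satisfies ∂_{n-1} ∘ ∂_n = 0, i.e., the weighted chain groups with weighted boundary maps form a chain complex. -/
open Finset

/-- An abstract simplicial complex on a vertex type `V`. -/
structure SComplex (V : Type*) where
  faces : Set (Finset V)
  not_empty_mem : ∅ ∉ faces
  down_closed : ∀ {s t : Finset V}, s ∈ faces → t ⊆ s → t.Nonempty → t ∈ faces

/-- The `n`-dimensional simplices (cardinality `n+1`) of a complex. -/
def SComplex.SimplexOf {V : Type*} (K : SComplex V) (n : ℕ) : Type _ :=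
  {s : Finset V // s ∈ K.faces ∧ s.card = n + 1}

/-- The `i`-th face of an `(n+1)`-simplex: delete the `i`-th vertex (in increasing order). -/
noncomputable def SComplex.face {V : Type*} [LinearOrder V] (K : SComplex V) {n : ℕ}
    (σ : K.SimplexOf (n + 1)) (i : Fin (n + 2)) : K.SimplexOf n := by
  classical
  refine ⟨σ.1.erase (σ.1.orderEmbOfFin σ.2.2 i), K.down_closed σ.2.1 (Finset.erase_subset _ _) ?_, ?_⟩
  · rw [← Finset.card_pos, Finset.card_erase_of_mem (Finset.orderEmbOfFin_mem _ _ _), σ.2.2]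
    omega
  · simp [Finset.card_erase_of_mem (Finset.orderEmbOfFin_mem _ _ _), σ.2.2]

/-- The quotient `b / a` in a commutative ring, when `a ∣ b` (an arbitrary choice of
quotient; it is unique when the ring is a domain and `a ≠ 0`). -/
noncomputable def dquot {R : Type*} [CommRing R] (b a : R) : R :=
  open Classical in if h : a ∣ b then h.choose else 0

/-- The weighted boundary map `∂ₙ : Cₙ₊₁ → Cₙ` of a weighted simplicial complex `(K, w)`
(chains in degree `n` are indexed by `n`-dimensional simplices), with coefficients pushed
forward along a ring homomorphism `g : R →+* S`. -/
noncomputable def wbnd {V R S : Type*} [LinearOrder V] [CommRing R] [CommRing S]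
    (g : R →+* S) (K : SComplex V) (w : Finset V → R) (n : ℕ) :
    (K.SimplexOf (n + 1) →₀ S) →ₗ[S] (K.SimplexOf n →₀ S) :=
  Finsupp.lsum S fun σ => LinearMap.toSpanSingleton S _
    (∑ i : Fin (n + 2),
      ((-1 : S) ^ (i : ℕ) * g (dquot (w σ.1) (w (K.face σ i).1))) •
        Finsupp.single (K.face σ i) (1 : S))

/-!
The weighted face maps `dᵢʷ σ = (w σ / w (dᵢ σ)) • dᵢ σ` satisfy the simplicial identities
`dᵢʷ ∘ dⱼ₊₁ʷ = dⱼʷ ∘ dᵢʷ` for `i ≤ j`: the weight quotients telescope,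
`(w σ / w τ) (w τ / w ρ) = w σ / w ρ` in the domain `R`, so both composites scale the common
double face `ρ` by `w σ / w ρ`. The weighted boundary is the alternating sum of these maps, and
the alternating double sum of any family satisfying the simplicial identities cancels in pairs.
-/

theorem Fin.sum_sum_neg_one_pow_smul_eq_zero {R M : Type*} [Ring R] [AddCommGroup M] [Module R M]
    {m : ℕ} (f : Fin (m + 2) → Fin (m + 1) → M)
    (hf : ∀ i j : Fin (m + 1), i ≤ j → f j.succ i = f i.castSucc j) :
    ∑ i : Fin (m + 2), ∑ j : Fin (m + 1), (-1 : R) ^ ((i : ℕ) + j) • f i j = 0 := by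
  set F : Fin (m + 2) × Fin (m + 1) → M := fun p => (-1 : R) ^ ((p.1 : ℕ) + p.2) • f p.1 p.2
  have hcancel : ∀ i j : Fin (m + 1), i ≤ j → F (j.succ, i) + F (i.castSucc, j) = 0 := by
    intro i j hij
    simp only [F, hf i j hij, ← add_smul, Fin.val_succ, Fin.val_castSucc]
    rw [show (j : ℕ) + 1 + i = i + j + 1 by ring, pow_succ, mul_neg_one, neg_add_cancel, zero_smul]
  let g : Fin (m + 2) × Fin (m + 1) → Fin (m + 2) × Fin (m + 1) := fun p =>
    if h : p.2.castSucc < p.1 then (p.2.castSucc, p.1.pred (Fin.ne_zero_of_lt h))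
    else (p.2.succ, p.1.castPred (Fin.ne_last_of_lt ((not_lt.1 h).trans_lt p.2.castSucc_lt_last)))
  have hg : ∀ i j : Fin (m + 1), i ≤ j →
      g (j.succ, i) = (i.castSucc, j) ∧ g (i.castSucc, j) = (j.succ, i) := by
    intro i j hij
    simp [g, Fin.castSucc_lt_succ_iff.2 hij, not_lt.2 hij]
  have hcover : ∀ p, ∃ i j : Fin (m + 1), i ≤ j ∧ (p = (j.succ, i) ∨ p = (i.castSucc, j)) := by
    rintro ⟨a, b⟩
    by_cases h : b.castSucc < a
    · obtain ⟨j, rfl⟩ := Fin.exists_succ_eq.2 (Fin.ne_zero_of_lt h)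
      exact ⟨b, j, Fin.castSucc_lt_succ_iff.1 h, .inl rfl⟩
    · obtain ⟨i, rfl⟩ :=
        Fin.exists_castSucc_eq.2 (Fin.ne_last_of_lt ((not_lt.1 h).trans_lt b.castSucc_lt_last))
      exact ⟨i, b, Fin.castSucc_le_castSucc_iff.1 (not_lt.1 h), .inr rfl⟩
  rw [← Finset.sum_product']
  refine Finset.sum_ninvolution (f := F) g (fun p => ?_) (fun p _ => ?_)
    (fun _ => Finset.mem_univ _) (fun p => ?_)
  all_goals obtain ⟨i, j, hij, rfl | rfl⟩ := hcover p
  · rw [(hg i j hij).1, hcancel i j hij]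
  · rw [(hg i j hij).2, add_comm, hcancel i j hij]
  · rw [(hg i j hij).1]; exact fun h => (Fin.castSucc_lt_succ_iff.2 hij).ne (congrArg Prod.fst h)
  · rw [(hg i j hij).2]; exact fun h => (Fin.castSucc_lt_succ_iff.2 hij).ne' (congrArg Prod.fst h)
  · rw [(hg i j hij).1, (hg i j hij).2]
  · rw [(hg i j hij).2, (hg i j hij).1]

theorem LinearMap.sum_smul_comp_sum_smul {R M N P ι κ : Type*} [CommRing R]
    [AddCommGroup M] [AddCommGroup N] [AddCommGroup P] [Module R M] [Module R N] [Module R P]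
    [Fintype ι] [Fintype κ] (a : κ → R) (b : ι → R) (A : ι → M →ₗ[R] N) (B : κ → N →ₗ[R] P) :
    (∑ j, a j • B j) ∘ₗ (∑ i, b i • A i) = ∑ i, ∑ j, (b i * a j) • (B j ∘ₗ A i) := by
  ext x
  simp only [coe_comp, coe_sum, coe_smul, Function.comp_apply, Finset.sum_apply, Pi.smul_apply,
    map_sum, map_smul, smul_sum, smul_smul]
  rw [Finset.sum_comm]
  simp only [mul_comm]

theorem Finset.orderEmbOfFin_erase {V : Type*} [LinearOrder V] {s : Finset V} {m : ℕ}
    (h : s.card = m + 1) (i : Fin (m + 1)) (h' : (s.erase (s.orderEmbOfFin h i)).card = m)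
    (j : Fin m) :
    (s.erase (s.orderEmbOfFin h i)).orderEmbOfFin h' j = s.orderEmbOfFin h (i.succAbove j) := by
  refine congrFun (Finset.orderEmbOfFin_unique h' (fun k => ?_)
    ((s.orderEmbOfFin h).strictMono.comp (Fin.strictMono_succAbove i))).symm j
  exact Finset.mem_erase.2 ⟨fun e => Fin.succAbove_ne i k ((s.orderEmbOfFin h).injective e),
    Finset.orderEmbOfFin_mem _ _ _⟩

lemma dquot_mul_cancel {R : Type*} [CommRing R] {a b : R} (h : a ∣ b) : a * dquot b a = b := by
  rw [dquot, dif_pos h]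
  exact h.choose_spec.symm

lemma dquot_mul_dquot {R : Type*} [CommRing R] [IsDomain R] {a b c : R} (ha : a ≠ 0)
    (hab : a ∣ b) (hbc : b ∣ c) : dquot c b * dquot b a = dquot c a := by
  apply mul_left_cancel₀ ha
  rw [mul_left_comm, dquot_mul_cancel hab, mul_comm, dquot_mul_cancel hbc,
    dquot_mul_cancel (hab.trans hbc)]

namespace SComplex

variable {V : Type*} [LinearOrder V] (K : SComplex V)

theorem face_val {n : ℕ} (σ : K.SimplexOf (n + 1)) (i : Fin (n + 2)) :
    (K.face σ i).1 = σ.1.erase (σ.1.orderEmbOfFin σ.2.2 i) :=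
  rfl

theorem face_subset {n : ℕ} (σ : K.SimplexOf (n + 1)) (i : Fin (n + 2)) : (K.face σ i).1 ⊆ σ.1 :=
  Finset.erase_subset _ _

theorem face_face_val {n : ℕ} (σ : K.SimplexOf (n + 2)) (i : Fin (n + 3)) (j : Fin (n + 2)) :
    (K.face (K.face σ i) j).1 =
      (σ.1.erase (σ.1.orderEmbOfFin σ.2.2 i)).erase (σ.1.orderEmbOfFin σ.2.2 (i.succAbove j)) := by
  rw [face_val]
  exact congrArg₂ Finset.erase rfl (Finset.orderEmbOfFin_erase σ.2.2 i _ j)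

theorem face_face_of_le {n : ℕ} (σ : K.SimplexOf (n + 2)) {i j : Fin (n + 2)} (hij : i ≤ j) :
    K.face (K.face σ j.succ) i = K.face (K.face σ i.castSucc) j := by
  apply Subtype.ext
  rw [face_face_val, face_face_val,
    Fin.succAbove_of_castSucc_lt _ _ (Fin.castSucc_lt_succ_iff.2 hij),
    Fin.succAbove_of_le_castSucc _ _ (Fin.castSucc_le_castSucc_iff.2 hij), Finset.erase_right_comm]

variable {R : Type*} [CommRing R]

noncomputable def weightedFace (w : Finset V → R) {n : ℕ} (i : Fin (n + 2)) :
    (K.SimplexOf (n + 1) →₀ R) →ₗ[R] (K.SimplexOf n →₀ R) :=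
  Finsupp.lsum R fun σ => dquot (w σ.1) (w (K.face σ i).1) • Finsupp.lsingle (K.face σ i)

theorem weightedFace_single (w : Finset V → R) {n : ℕ} (i : Fin (n + 2))
    (σ : K.SimplexOf (n + 1)) (r : R) :
    K.weightedFace w i (Finsupp.single σ r) =
      dquot (w σ.1) (w (K.face σ i).1) • Finsupp.single (K.face σ i) r := by
  simp [weightedFace]

theorem wbnd_eq_sum_weightedFace (w : Finset V → R) (n : ℕ) :
    wbnd (RingHom.id R) K w n = ∑ i : Fin (n + 2), (-1 : R) ^ (i : ℕ) • K.weightedFace w i := by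
  ext σ : 2
  simp [wbnd, weightedFace_single]

theorem weightedFace_weightedFace_single [IsDomain R] {w : Finset V → R}
    (hw0 : ∀ s ∈ K.faces, w s ≠ 0)
    (hdvd : ∀ {s t : Finset V}, s ∈ K.faces → t ∈ K.faces → t ⊆ s → w t ∣ w s) {n : ℕ}
    (i : Fin (n + 3)) (j : Fin (n + 2)) (σ : K.SimplexOf (n + 2)) (r : R) :
    K.weightedFace w j (K.weightedFace w i (Finsupp.single σ r)) =
      dquot (w σ.1) (w (K.face (K.face σ i) j).1) • Finsupp.single (K.face (K.face σ i) j) r := by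
  rw [weightedFace_single, map_smul, weightedFace_single, smul_smul,
    dquot_mul_dquot (hw0 _ (K.face (K.face σ i) j).2.1)
      (hdvd (K.face σ i).2.1 (K.face (K.face σ i) j).2.1 (K.face_subset _ j))
      (hdvd σ.2.1 (K.face σ i).2.1 (K.face_subset σ i))]

theorem weightedFace_comp_weightedFace_of_le [IsDomain R] {w : Finset V → R}
    (hw0 : ∀ s ∈ K.faces, w s ≠ 0)
    (hdvd : ∀ {s t : Finset V}, s ∈ K.faces → t ∈ K.faces → t ⊆ s → w t ∣ w s) {n : ℕ}
    {i j : Fin (n + 2)} (hij : i ≤ j) :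
    K.weightedFace w i ∘ₗ K.weightedFace w j.succ =
      K.weightedFace w j ∘ₗ K.weightedFace w i.castSucc := by
  refine Finsupp.lhom_ext fun σ r => ?_
  simp only [LinearMap.comp_apply, K.weightedFace_weightedFace_single hw0 hdvd,
    K.face_face_of_le σ hij]

end SComplex

/-- For a weighted simplicial complex `(K, w)` over an integral domain `R`,
with all weights of simplices nonzero (and the divisibility condition `w τ ∣ w σ` for
`τ ⊆ σ`), the weighted boundary maps satisfy `∂ₙ ∘ ∂ₙ₊₁ = 0`; i.e. the weighted chain
groups form a chain complex. -/
theorem weighted_boundary_squared_zero {V R : Type*} [LinearOrder V]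
    [CommRing R] [IsDomain R] (K : SComplex V) (w : Finset V → R)
    (hw0 : ∀ s ∈ K.faces, w s ≠ 0)
    (hdvd : ∀ {s t : Finset V}, s ∈ K.faces → t ∈ K.faces → t ⊆ s → w t ∣ w s)
    (n : ℕ) :
    (wbnd (RingHom.id R) K w n).comp (wbnd (RingHom.id R) K w (n + 1)) = 0 := by
  rw [K.wbnd_eq_sum_weightedFace, K.wbnd_eq_sum_weightedFace, LinearMap.sum_smul_comp_sum_smul]
  simp only [← pow_add]
  exact Fin.sum_sum_neg_one_pow_smul_eq_zero (fun i j => K.weightedFace w j ∘ₗ K.weightedFace w i)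
    fun _ _ hij => K.weightedFace_comp_weightedFace_of_le hw0 hdvd hij
end

section
/- For any simplicial map f: K → L between weighted simplicial complexes, the induced chain map f_♯ commutes with the weighted boundary maps: f_♯ ∂ = ∂ f_♯. -/
open Finset

/-- The chain map induced by a simplicial map `f`: an oriented simplex `σ` is sent to
`f(σ)` if `f` is injective on the vertices of `σ`, and to `0` otherwise. -/
noncomputable def fsharp {V V' S : Type*} [DecidableEq V'] [CommRing S]
    (K : SComplex V) (L : SComplex V') (f : V → V')
    (hf : ∀ s ∈ K.faces, (s.image f : Finset V') ∈ L.faces) (n : ℕ) :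
    (K.SimplexOf n →₀ S) →ₗ[S] (L.SimplexOf n →₀ S) := by
  classical
  exact Finsupp.lsum S fun σ => LinearMap.toSpanSingleton S _
    (if h : (σ.1.image f).card = n + 1 then
      Finsupp.single (⟨σ.1.image f, hf σ.1 σ.2.1, h⟩ : L.SimplexOf n) (1 : S)
    else 0)


/-!
It suffices to check the identity on a single simplex `σ`. If the monotone map `f` is injective
on `σ`, it preserves the order of the vertices, so the `i`-th face of `f(σ)` is the image of the
`i`-th face of `σ`, and weight compatibility matches the coefficients term by term. Otherwise `f`
identifies two consecutive vertices of `σ`: the two faces omitting them have the same image and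
the same weight but opposite signs, and every other face still contains both vertices, so is
sent to `0`.
-/

namespace Finset

variable {V V' : Type*} [DecidableEq V] [DecidableEq V'] {f : V → V'} {s : Finset V}

lemma image_erase_of_injOn (hinj : Set.InjOn f s) {a : V} (ha : a ∈ s) :
    (s.erase a).image f = (s.image f).erase (f a) := by
  ext x
  simp only [mem_image, mem_erase]
  constructor
  · rintro ⟨y, ⟨hya, hys⟩, rfl⟩
    exact ⟨fun h => hya (hinj hys ha h), y, hys, rfl⟩
  · rintro ⟨hx, y, hys, rfl⟩
    exact ⟨y, ⟨fun h => hx (h ▸ rfl), hys⟩, rfl⟩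

lemma image_erase_of_eq {a c : V} (hc : c ∈ s) (hca : c ≠ a) (hf : f c = f a) :
    (s.erase a).image f = s.image f := by
  refine (image_subset_image (erase_subset a s)).antisymm fun x hx => ?_
  obtain ⟨y, hys, rfl⟩ := mem_image.1 hx
  by_cases hya : y = a
  · exact mem_image.2 ⟨c, mem_erase.2 ⟨hca, hc⟩, hya ▸ hf⟩
  · exact mem_image_of_mem f (mem_erase.2 ⟨hya, hys⟩)

end Finset

lemma Monotone.exists_eq_succ_of_not_injOn {V V' : Type*} [LinearOrder V] [PartialOrder V']
    {f : V → V'} (hmono : Monotone f) {s : Finset V} {m : ℕ} (h : s.card = m + 1)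
    (hs : ¬ Set.InjOn f s) :
    ∃ j : Fin m, f (s.orderEmbOfFin h j.castSucc) = f (s.orderEmbOfFin h j.succ) := by
  by_contra! hne
  set v := s.orderEmbOfFin h
  have hstrict : StrictMono (f ∘ v) := Fin.strictMono_iff_lt_succ.2 fun j =>
    (hmono (v.monotone (Fin.castSucc_le_succ j))).lt_of_ne (hne j)
  apply hs
  rw [← Finset.range_orderEmbOfFin s h]
  rintro _ ⟨i, rfl⟩ _ ⟨k, rfl⟩ hik
  exact congrArg v (hstrict.injective hik)

namespace SComplex

variable {V V' : Type*} [LinearOrder V] [LinearOrder V']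

lemma coe_face (K : SComplex V) {n : ℕ} (σ : K.SimplexOf (n + 1)) (i : Fin (n + 2)) :
    (K.face σ i).1 = σ.1.erase (σ.1.orderEmbOfFin σ.2.2 i) := rfl

lemma image_face_of_injOn [DecidableEq V'] {K : SComplex V} {L : SComplex V'} {f : V → V'}
    (hmono : Monotone f) {n : ℕ} (σ : K.SimplexOf (n + 1)) (τ : L.SimplexOf (n + 1)) (hτ : τ.1 = σ.1.image f)
    (hinj : Set.InjOn f σ.1) (i : Fin (n + 2)) :
    (K.face σ i).1.image f = (L.face τ i).1 := by
  set v := σ.1.orderEmbOfFin σ.2.2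
  have hv : ∀ i, v i ∈ σ.1 := Finset.orderEmbOfFin_mem σ.1 σ.2.2
  have hstrict : StrictMono (f ∘ v) := (hmono.comp v.monotone).strictMono_of_injective
    fun i k h => v.injective (hinj (hv i) (hv k) h)
  have hfv : f ∘ v = τ.1.orderEmbOfFin τ.2.2 :=
    Finset.orderEmbOfFin_unique τ.2.2 (fun i => hτ ▸ Finset.mem_image_of_mem f (hv i)) hstrict
  rw [coe_face, coe_face, Finset.image_erase_of_injOn hinj (hv i), ← hτ, ← hfv]
  congr!

end SComplex

lemma wbnd_single {V R S : Type*} [LinearOrder V] [CommRing R] [CommRing S]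
    (g : R →+* S) (K : SComplex V) (w : Finset V → R) (n : ℕ) (σ : K.SimplexOf (n + 1)) :
    wbnd g K w n (Finsupp.single σ 1) = ∑ i : Fin (n + 2),
      ((-1 : S) ^ (i : ℕ) * g (dquot (w σ.1) (w (K.face σ i).1))) •
        Finsupp.single (K.face σ i) 1 := by
  rw [wbnd, Finsupp.lsum_single, LinearMap.toSpanSingleton_apply, one_smul]

section fsharp

variable {V V' S : Type*} [DecidableEq V'] [CommRing S] {K : SComplex V} {L : SComplex V'}
  {f : V → V'} {hf : ∀ s ∈ K.faces, (s.image f : Finset V') ∈ L.faces} {n : ℕ}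

lemma fsharp_single (σ : K.SimplexOf n) :
    fsharp K L f hf n (Finsupp.single σ (1 : S)) =
      if h : (σ.1.image f).card = n + 1 then Finsupp.single ⟨σ.1.image f, hf σ.1 σ.2.1, h⟩ 1
      else 0 := by
  rw [fsharp, Finsupp.lsum_single, LinearMap.toSpanSingleton_apply, one_smul]

lemma fsharp_single_of_injOn (σ : K.SimplexOf n) (hinj : Set.InjOn f σ.1) :
    fsharp K L f hf n (Finsupp.single σ (1 : S)) =
      Finsupp.single ⟨σ.1.image f, hf σ.1 σ.2.1, (card_image_of_injOn hinj).trans σ.2.2⟩ 1 := by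
  rw [fsharp_single, dif_pos ((card_image_of_injOn hinj).trans σ.2.2)]

lemma fsharp_single_of_not_injOn (σ : K.SimplexOf n) (hnot : ¬ Set.InjOn f σ.1) :
    fsharp K L f hf n (Finsupp.single σ (1 : S)) = 0 := by
  rw [fsharp_single, dif_neg fun h => hnot (card_image_iff.1 (h.trans σ.2.2.symm))]

lemma fsharp_single_congr {σ σ' : K.SimplexOf n} (h : σ.1.image f = σ'.1.image f) :
    fsharp K L f hf n (Finsupp.single σ (1 : S)) = fsharp K L f hf n (Finsupp.single σ' 1) := by
  simp only [fsharp_single, h]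

end fsharp

section Commute

variable {V V' R S : Type*} [LinearOrder V] [LinearOrder V'] [DecidableEq V'] [CommRing R]
  [CommRing S] {K : SComplex V} {L : SComplex V'} {w : Finset V → R} {w' : Finset V' → R}
  {f : V → V'} {hf : ∀ s ∈ K.faces, (s.image f : Finset V') ∈ L.faces} {n : ℕ}

lemma fsharp_wbnd_single_of_injOn (g : R →+* S) (hmono : Monotone f)
    (hcompat : ∀ s ∈ K.faces, w' (s.image f) = w s) (σ : K.SimplexOf (n + 1))
    (hinj : Set.InjOn f σ.1) :
    fsharp K L f hf n (wbnd g K w n (Finsupp.single σ 1)) =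
      wbnd g L w' n (fsharp K L f hf (n + 1) (Finsupp.single σ 1)) := by
  set τ : L.SimplexOf (n + 1) :=
    ⟨σ.1.image f, hf σ.1 σ.2.1, (card_image_of_injOn hinj).trans σ.2.2⟩
  have himage (i : Fin (n + 2)) : (K.face σ i).1.image f = (L.face τ i).1 :=
    SComplex.image_face_of_injOn hmono σ τ rfl hinj i
  have hσ : fsharp K L f hf (n + 1) (Finsupp.single σ 1) = Finsupp.single τ (1 : S) :=
    fsharp_single_of_injOn σ hinj
  rw [hσ, wbnd_single, wbnd_single, map_sum]
  refine Finset.sum_congr rfl fun i _ => ?_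
  have hface : Set.InjOn f (K.face σ i).1 := hinj.mono (erase_subset _ _)
  rw [map_smul, fsharp_single_of_injOn _ hface]
  congr 1
  · rw [← hcompat σ.1 σ.2.1, ← hcompat _ (K.face σ i).2.1, himage i]
  · exact congrArg (Finsupp.single · 1) (Subtype.ext (himage i))

lemma fsharp_wbnd_single_of_not_injOn (g : R →+* S) (hmono : Monotone f)
    (hcompat : ∀ s ∈ K.faces, w' (s.image f) = w s) (σ : K.SimplexOf (n + 1))
    (hnot : ¬ Set.InjOn f σ.1) :
    fsharp K L f hf n (wbnd g K w n (Finsupp.single σ 1)) = 0 := by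
  obtain ⟨j, hj⟩ := hmono.exists_eq_succ_of_not_injOn σ.2.2 hnot
  set v := σ.1.orderEmbOfFin σ.2.2
  have hv : ∀ i, v i ∈ σ.1 := Finset.orderEmbOfFin_mem σ.1 σ.2.2
  have hj_ne : j.castSucc ≠ j.succ := Fin.castSucc_lt_succ.ne
  have hv_ne : v j.castSucc ≠ v j.succ := v.injective.ne hj_ne
  have himage : (K.face σ j.castSucc).1.image f = (K.face σ j.succ).1.image f := by
    rw [SComplex.coe_face, SComplex.coe_face, image_erase_of_eq (hv j.succ) hv_ne.symm hj.symm,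
      image_erase_of_eq (hv j.castSucc) hv_ne hj]
  have hweight : w (K.face σ j.castSucc).1 = w (K.face σ j.succ).1 := by
    rw [← hcompat _ (K.face σ _).2.1, himage, hcompat _ (K.face σ _).2.1]
  rw [wbnd_single, map_sum, Fintype.sum_eq_add j.castSucc j.succ hj_ne]
  · rw [map_smul, map_smul, fsharp_single_congr himage, hweight, ← add_smul, Fin.val_castSucc,
      Fin.val_succ, pow_succ]
    simp
  · rintro i ⟨hi₁, hi₂⟩
    refine (map_smul _ _ _).trans ?_
    rw [fsharp_single_of_not_injOn, smul_zero]
    intro hface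
    have hmem (k : Fin (n + 2)) (hk : k ≠ i) : v k ∈ (K.face σ i).1 :=
      mem_erase.2 ⟨v.injective.ne hk, hv k⟩
    exact hv_ne (hface (hmem _ hi₁.symm) (hmem _ hi₂.symm) hj)

end Commute

theorem fsharp_comm_weighted_boundary_general {V V' R : Type*} [LinearOrder V] [LinearOrder V'] [DecidableEq V']
    [CommRing R]
    (K : SComplex V) (L : SComplex V') (w : Finset V → R) (w' : Finset V' → R)
    (f : V → V') (hmono : Monotone f)
    (hf : ∀ s ∈ K.faces, (s.image f : Finset V') ∈ L.faces)
    (hcompat : ∀ s ∈ K.faces, w' (s.image f) = w s) (n : ℕ) :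
    (fsharp K L f hf n).comp (wbnd (RingHom.id R) K w n) =
      (wbnd (RingHom.id R) L w' n).comp (fsharp K L f hf (n + 1)) := by
  refine Finsupp.lhom_ext' fun σ => LinearMap.ext_ring ?_
  simp only [LinearMap.comp_apply, Finsupp.lsingle_apply]
  by_cases hinj : Set.InjOn f σ.1
  · exact fsharp_wbnd_single_of_injOn _ hmono hcompat σ hinj
  · rw [fsharp_wbnd_single_of_not_injOn _ hmono hcompat σ hinj,
      fsharp_single_of_not_injOn σ hinj, map_zero]

/-- For a (monotone, weight-compatible) simplicial map `f : K → L`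
between weighted simplicial complexes over an integral domain `R`, the induced chain map
`f♯` commutes with the weighted boundary maps: `f♯ ∂ = ∂ f♯`. -/
theorem fsharp_comm_weighted_boundary {V V' R : Type*} [LinearOrder V] [LinearOrder V'] [DecidableEq V']
    [CommRing R] [IsDomain R]
    (K : SComplex V) (L : SComplex V') (w : Finset V → R) (w' : Finset V' → R)
    (hw0 : ∀ s ∈ K.faces, w s ≠ 0) (hw0' : ∀ s ∈ L.faces, w' s ≠ 0)
    (hdvd : ∀ {s t : Finset V}, s ∈ K.faces → t ∈ K.faces → t ⊆ s → w t ∣ w s)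
    (hdvd' : ∀ {s t : Finset V'}, s ∈ L.faces → t ∈ L.faces → t ⊆ s → w' t ∣ w' s)
    (f : V → V') (hmono : Monotone f)
    (hf : ∀ s ∈ K.faces, (s.image f : Finset V') ∈ L.faces)
    (hcompat : ∀ s ∈ K.faces, w' (s.image f) = w s) (n : ℕ) :
    (fsharp K L f hf n).comp (wbnd (RingHom.id R) K w n) =
      (wbnd (RingHom.id R) L w' n).comp (fsharp K L f hf (n + 1)) :=
  fsharp_comm_weighted_boundary_general K L w w' f hmono hf hcompat n
end

section
/- Let (K,w) be a WSC with K = K₀ ∪ K₁ for subcomplexes K₀, K₁, and let A = K₀ ∩ K₁. Then the sequence of chain complexes 0 → C_*(A,w) → C_*(K₀,w) ⊕ C_*(K₁,w) → C_*(K,w) → 0, with maps φ(c) = (i_♯ c, -j_♯ c) and ψ(d,e) = k_♯ d + l_♯ e induced by inclusions, is a short exact sequence. -/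
open Finset

/-- The chain map induced by an inclusion of simplicial complexes. -/
noncomputable def inclMap {V S : Type*} [CommRing S] {K K' : SComplex V}
    (h : K.faces ⊆ K'.faces) (n : ℕ) :
    (K.SimplexOf n →₀ S) →ₗ[S] (K'.SimplexOf n →₀ S) :=
  Finsupp.lmapDomain S S fun σ => (⟨σ.1, h σ.2.1, σ.2.2⟩ : K'.SimplexOf n)


/- The three inclusion-induced maps are `mapDomain` along injective maps of simplices, so the
sequence is exact degreewise for purely combinatorial reasons: `ψ` hits every basis simplex since
`K = K₀ ∪ K₁`; `φ` is injective already in its first component; and if `k♯ d + l♯ e = 0` then `d`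
vanishes on simplices outside `K₁`, hence lives on `K₀ ∩ K₁ = A`, and `e` is forced by injectivity
of `l♯`. Inclusions commute with the weighted boundary because a face of a simplex and its weight
do not depend on the ambient complex. -/

section InclusionChainMap

variable {V S : Type*} [CommRing S] {K K' : SComplex V}

def simplexIncl (h : K.faces ⊆ K'.faces) (n : ℕ) (σ : K.SimplexOf n) : K'.SimplexOf n :=
  ⟨σ.1, h σ.2.1, σ.2.2⟩

theorem simplexIncl_injective (h : K.faces ⊆ K'.faces) (n : ℕ) :
    Function.Injective (simplexIncl h n) :=
  fun _ _ hστ => Subtype.ext (congrArg (fun τ : K'.SimplexOf n => τ.1) hστ)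

theorem exists_simplexIncl_eq (h : K.faces ⊆ K'.faces) {n : ℕ} {τ : K'.SimplexOf n}
    (hτ : τ.1 ∈ K.faces) : ∃ σ, simplexIncl h n σ = τ :=
  ⟨⟨τ.1, hτ, τ.2.2⟩, rfl⟩

theorem inclMap_single (h : K.faces ⊆ K'.faces) (n : ℕ) (σ : K.SimplexOf n) (b : S) :
    inclMap h n (Finsupp.single σ b) = Finsupp.single (simplexIncl h n σ) b :=
  Finsupp.mapDomain_single

theorem inclMap_apply_simplexIncl (h : K.faces ⊆ K'.faces) (n : ℕ) (c : K.SimplexOf n →₀ S)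
    (σ : K.SimplexOf n) : inclMap h n c (simplexIncl h n σ) = c σ :=
  Finsupp.mapDomain_apply (simplexIncl_injective h n) c σ

theorem inclMap_apply_of_notMem (h : K.faces ⊆ K'.faces) (n : ℕ) (c : K.SimplexOf n →₀ S)
    (τ : K'.SimplexOf n) (hτ : τ.1 ∉ K.faces) : inclMap h n c τ = 0 :=
  Finsupp.mapDomain_of_notMem_range c τ fun ⟨σ, hσ⟩ => hτ (hσ ▸ σ.2.1)

theorem inclMap_injective (h : K.faces ⊆ K'.faces) (n : ℕ) :
    Function.Injective (inclMap (S := S) h n) :=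
  Finsupp.mapDomain_injective (simplexIncl_injective h n)

theorem exists_inclMap_eq (h : K.faces ⊆ K'.faces) (n : ℕ) (c : K'.SimplexOf n →₀ S)
    (hc : ∀ τ : K'.SimplexOf n, τ.1 ∉ K.faces → c τ = 0) : ∃ c₀, inclMap h n c₀ = c := by
  have hsupp : (c.support : Set (K'.SimplexOf n)) ⊆ Set.range (simplexIncl h n) := by
    intro τ hτ
    by_contra hτK
    exact Finsupp.mem_support_iff.mp hτ (hc τ fun hK => hτK (exists_simplexIncl_eq h hK))
  exact ⟨_, Finsupp.mapDomain_comapDomain _ (simplexIncl_injective h n) c hsupp⟩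

theorem inclMap_comp_inclMap {K'' : SComplex V} (h : K.faces ⊆ K'.faces)
    (h' : K'.faces ⊆ K''.faces) (n : ℕ) :
    (inclMap (S := S) h' n).comp (inclMap h n) = inclMap (h.trans h') n :=
  Finsupp.lhom_ext fun σ b => by
    simp only [LinearMap.comp_apply, inclMap_single]
    rfl

theorem inclMap_comp_wbnd {R : Type*} [LinearOrder V] [CommRing R] (g : R →+* S)
    (h : K.faces ⊆ K'.faces) (w : Finset V → R) (n : ℕ) :
    (inclMap (S := S) h n).comp (wbnd g K w n) = (wbnd g K' w n).comp (inclMap h (n + 1)) := by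
  refine Finsupp.lhom_ext fun σ b => ?_
  simp only [LinearMap.comp_apply, inclMap_single, wbnd, Finsupp.lsum_single,
    LinearMap.toSpanSingleton_apply, map_smul, map_sum]
  rfl

end InclusionChainMap

section MayerVietoris

variable {V S : Type*} [CommRing S] {K K₀ K₁ A : SComplex V}

theorem inclMap_prod_neg_injective (hA0 : A.faces ⊆ K₀.faces) (hA1 : A.faces ⊆ K₁.faces)
    (n : ℕ) :
    Function.Injective ((inclMap (S := S) hA0 n).prod (-(inclMap (S := S) hA1 n))) :=
  fun _ _ hc => inclMap_injective hA0 n (congrArg Prod.fst hc)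

theorem inclMap_coprod_surjective (h0 : K₀.faces ⊆ K.faces) (h1 : K₁.faces ⊆ K.faces)
    (hcover : K.faces ⊆ K₀.faces ∪ K₁.faces) (n : ℕ) :
    Function.Surjective ((inclMap (S := S) h0 n).coprod (inclMap (S := S) h1 n)) := by
  intro c
  induction c using Finsupp.induction_linear with
  | zero => exact ⟨0, map_zero _⟩
  | add c c' hc hc' =>
    obtain ⟨x, rfl⟩ := hc
    obtain ⟨x', rfl⟩ := hc'
    exact ⟨x + x', map_add _ x x'⟩
  | single τ b =>
    rcases hcover τ.2.1 with hτ | hτ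
    · obtain ⟨σ, rfl⟩ := exists_simplexIncl_eq h0 hτ
      exact ⟨(Finsupp.single σ b, 0), by simp [inclMap_single]⟩
    · obtain ⟨σ, rfl⟩ := exists_simplexIncl_eq h1 hτ
      exact ⟨(0, Finsupp.single σ b), by simp [inclMap_single]⟩

theorem exact_inclMap_prod_neg_inclMap_coprod (h0 : K₀.faces ⊆ K.faces)
    (h1 : K₁.faces ⊆ K.faces) (hA0 : A.faces ⊆ K₀.faces) (hA1 : A.faces ⊆ K₁.faces)
    (hinter : K₀.faces ∩ K₁.faces ⊆ A.faces) (n : ℕ) :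
    Function.Exact ((inclMap (S := S) hA0 n).prod (-(inclMap (S := S) hA1 n)))
      ((inclMap (S := S) h0 n).coprod (inclMap (S := S) h1 n)) := by
  have hsquare : ∀ c, inclMap (S := S) h0 n (inclMap hA0 n c) = inclMap h1 n (inclMap hA1 n c) :=
    fun c => (LinearMap.congr_fun (inclMap_comp_inclMap hA0 h0 n) c).trans
      (LinearMap.congr_fun (inclMap_comp_inclMap hA1 h1 n) c).symm
  rintro ⟨d, e⟩
  constructor
  · intro hsum
    rw [LinearMap.coprod_apply] at hsum
    have hd : ∀ σ : K₀.SimplexOf n, σ.1 ∉ A.faces → d σ = 0 := fun σ hσA => by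
      have hσ1 : σ.1 ∉ K₁.faces := fun hσ1 => hσA (hinter ⟨σ.2.1, hσ1⟩)
      simpa [inclMap_apply_simplexIncl, inclMap_apply_of_notMem h1 n e (simplexIncl h0 n σ) hσ1] using
        DFunLike.congr_fun hsum (simplexIncl h0 n σ)
    obtain ⟨c, rfl⟩ := exists_inclMap_eq hA0 n d hd
    refine ⟨c, Prod.ext rfl (inclMap_injective h1 n ?_)⟩
    rw [LinearMap.prod_apply, Function.prod_apply, LinearMap.neg_apply, map_neg, ← hsquare,
      ← eq_neg_of_add_eq_zero_right hsum]
  · rintro ⟨c, hc⟩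
    rw [← hc]
    show inclMap h0 n (inclMap hA0 n c) + inclMap h1 n (-inclMap hA1 n c) = 0
    rw [map_neg, hsquare, add_neg_cancel]

end MayerVietoris

theorem mayer_vietoris_short_exact_general {V R : Type*} [LinearOrder V] [CommRing R]
    (K K₀ K₁ A : SComplex V)
    (h0 : K₀.faces ⊆ K.faces) (h1 : K₁.faces ⊆ K.faces)
    (hA0 : A.faces ⊆ K₀.faces) (hA1 : A.faces ⊆ K₁.faces)
    (hunion : K.faces = K₀.faces ∪ K₁.faces) (hinter : A.faces = K₀.faces ∩ K₁.faces)
    (w : Finset V → R) :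
    (∀ n, Function.Injective
        ⇑(((inclMap (S := R) hA0 n).prod (-(inclMap (S := R) hA1 n)))))
    ∧ (∀ n, Function.Exact
        ⇑((inclMap (S := R) hA0 n).prod (-(inclMap (S := R) hA1 n)))
        ⇑((inclMap (S := R) h0 n).coprod (inclMap (S := R) h1 n)))
    ∧ (∀ n, Function.Surjective ⇑((inclMap (S := R) h0 n).coprod (inclMap (S := R) h1 n)))
    ∧ (∀ n, (inclMap (S := R) hA0 n).comp (wbnd (RingHom.id R) A w n) =
        (wbnd (RingHom.id R) K₀ w n).comp (inclMap hA0 (n + 1)))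
    ∧ (∀ n, (inclMap (S := R) hA1 n).comp (wbnd (RingHom.id R) A w n) =
        (wbnd (RingHom.id R) K₁ w n).comp (inclMap hA1 (n + 1)))
    ∧ (∀ n, (inclMap (S := R) h0 n).comp (wbnd (RingHom.id R) K₀ w n) =
        (wbnd (RingHom.id R) K w n).comp (inclMap h0 (n + 1)))
    ∧ (∀ n, (inclMap (S := R) h1 n).comp (wbnd (RingHom.id R) K₁ w n) =
        (wbnd (RingHom.id R) K w n).comp (inclMap h1 (n + 1))) :=
  ⟨inclMap_prod_neg_injective hA0 hA1,
    exact_inclMap_prod_neg_inclMap_coprod h0 h1 hA0 hA1 hinter.symm.subset,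
    inclMap_coprod_surjective h0 h1 hunion.subset,
    inclMap_comp_wbnd (RingHom.id R) hA0 w, inclMap_comp_wbnd (RingHom.id R) hA1 w,
    inclMap_comp_wbnd (RingHom.id R) h0 w, inclMap_comp_wbnd (RingHom.id R) h1 w⟩

/-- Let `(K, w)` be a weighted simplicial complex over an integral
domain, with subcomplexes `K₀, K₁` such that `K = K₀ ∪ K₁`, and `A = K₀ ∩ K₁`.  Then
`0 → C_*(A,w) → C_*(K₀,w) ⊕ C_*(K₁,w) → C_*(K,w) → 0`, with the maps
`φ c = (i♯ c, -(j♯ c))` and `ψ (d, e) = k♯ d + l♯ e` induced by the inclusions,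
is a short exact sequence of chain complexes: in each degree `φ` is injective, `ψ` is
surjective, `im φ = ker ψ`, and `φ`, `ψ` are chain maps. -/
theorem mayer_vietoris_short_exact {V R : Type*} [LinearOrder V] [CommRing R] [IsDomain R]
    (K K₀ K₁ A : SComplex V)
    (h0 : K₀.faces ⊆ K.faces) (h1 : K₁.faces ⊆ K.faces)
    (hA0 : A.faces ⊆ K₀.faces) (hA1 : A.faces ⊆ K₁.faces)
    (hunion : K.faces = K₀.faces ∪ K₁.faces) (hinter : A.faces = K₀.faces ∩ K₁.faces)
    (w : Finset V → R) (hw0 : ∀ s ∈ K.faces, w s ≠ 0)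
    (hdvd : ∀ {s t : Finset V}, s ∈ K.faces → t ∈ K.faces → t ⊆ s → w t ∣ w s) :
    (∀ n, Function.Injective
        ⇑(((inclMap (S := R) hA0 n).prod (-(inclMap (S := R) hA1 n)))))
    ∧ (∀ n, Function.Exact
        ⇑((inclMap (S := R) hA0 n).prod (-(inclMap (S := R) hA1 n)))
        ⇑((inclMap (S := R) h0 n).coprod (inclMap (S := R) h1 n)))
    ∧ (∀ n, Function.Surjective ⇑((inclMap (S := R) h0 n).coprod (inclMap (S := R) h1 n)))
    ∧ (∀ n, (inclMap (S := R) hA0 n).comp (wbnd (RingHom.id R) A w n) =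
        (wbnd (RingHom.id R) K₀ w n).comp (inclMap hA0 (n + 1)))
    ∧ (∀ n, (inclMap (S := R) hA1 n).comp (wbnd (RingHom.id R) A w n) =
        (wbnd (RingHom.id R) K₁ w n).comp (inclMap hA1 (n + 1)))
    ∧ (∀ n, (inclMap (S := R) h0 n).comp (wbnd (RingHom.id R) K₀ w n) =
        (wbnd (RingHom.id R) K w n).comp (inclMap h0 (n + 1)))
    ∧ (∀ n, (inclMap (S := R) h1 n).comp (wbnd (RingHom.id R) K₁ w n) =
        (wbnd (RingHom.id R) K w n).comp (inclMap h1 (n + 1))) :=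
  mayer_vietoris_short_exact_general K K₀ K₁ A h0 h1 hA0 hA1 hunion hinter w
end

section
/- Let (K,w) be a WSC with all weights nonzero, over a field 𝔽 (weights in 𝔽). Let ∂ and ∂_w be the unweighted and weighted boundary maps on C_n(K;𝔽). Then the map ψ(Σ a_i σ_i) = Σ (a_i / w(σ_i)) σ_i is an 𝔽-linear isomorphism ker ∂ → ker ∂_w. -/
open Finset

/-- The weighted boundary map over a field `F`, with weight function `w : K → F`:
`∂_w σ = Σᵢ (w σ / w (dᵢ σ)) (-1)ⁱ dᵢ σ`.  Taking `w = 1` gives the ordinary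
(unweighted) simplicial boundary map. -/
noncomputable def fbnd {V F : Type*} [LinearOrder V] [Field F]
    (K : SComplex V) (w : Finset V → F) (n : ℕ) :
    (K.SimplexOf (n + 1) →₀ F) →ₗ[F] (K.SimplexOf n →₀ F) :=
  Finsupp.lsum F fun σ => LinearMap.toSpanSingleton F _
    (∑ i : Fin (n + 2),
      ((-1 : F) ^ (i : ℕ) * (w σ.1 / w (K.face σ i).1)) •
        Finsupp.single (K.face σ i) (1 : F))

/-- The linear map `ψ (Σ aᵢ σᵢ) = Σ (aᵢ / w σᵢ) σᵢ` on weighted chains over a field. -/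
noncomputable def psiMap {V F : Type*} [LinearOrder V] [Field F]
    (K : SComplex V) (w : Finset V → F) (n : ℕ) :
    (K.SimplexOf n →₀ F) →ₗ[F] (K.SimplexOf n →₀ F) :=
  Finsupp.lsum F fun σ => LinearMap.toSpanSingleton F _
    (Finsupp.single σ ((w σ.1)⁻¹))

/-! ψ is diagonal with nonzero entries `1 / w σ`, hence invertible. It intertwines the two
boundaries, `∂_w (σ / w σ) = Σᵢ (-1)ⁱ dᵢ σ / w (dᵢ σ) = ψ (∂ σ)`, so it conjugates `∂` into `∂_w`
and therefore carries `ker ∂` onto `ker ∂_w`. -/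

theorem LinearEquiv.map_ker_eq_ker_of_comp_eq {R M M' N N' : Type*} [Semiring R]
    [AddCommMonoid M] [AddCommMonoid M'] [AddCommMonoid N] [AddCommMonoid N']
    [Module R M] [Module R M'] [Module R N] [Module R N']
    (e : M ≃ₗ[R] M') (e' : N ≃ₗ[R] N') {f : M →ₗ[R] N} {g : M' →ₗ[R] N'}
    (h : g ∘ₗ e = e' ∘ₗ f) :
    Submodule.map (e : M →ₗ[R] M') (LinearMap.ker f) = LinearMap.ker g :=
  calc Submodule.map (e : M →ₗ[R] M') (LinearMap.ker f)
      = Submodule.map (e : M →ₗ[R] M') (LinearMap.ker ((e' : N →ₗ[R] N') ∘ₗ f)) := by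
        rw [LinearEquiv.ker_comp]
    _ = Submodule.map (e : M →ₗ[R] M')
          (Submodule.comap (e : M →ₗ[R] M') (LinearMap.ker g)) := by
        rw [← h, LinearMap.ker_comp]
    _ = LinearMap.ker g := Submodule.map_comap_eq_of_surjective e.surjective _

section Weighted

variable {V F : Type*} [LinearOrder V] [Field F] (K : SComplex V)

theorem psiMap_single (w : Finset V → F) {n : ℕ} (σ : K.SimplexOf n) (a : F) :
    psiMap K w n (Finsupp.single σ a) = Finsupp.single σ (a * (w σ.1)⁻¹) := by
  simp [psiMap]

theorem fbnd_single (w : Finset V → F) {n : ℕ} (σ : K.SimplexOf (n + 1)) (a : F) :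
    fbnd K w n (Finsupp.single σ a) =
      ∑ i : Fin (n + 2),
        Finsupp.single (K.face σ i) (a * ((-1) ^ (i : ℕ) * (w σ.1 / w (K.face σ i).1))) := by
  simp only [fbnd, Finsupp.lsum_single, LinearMap.toSpanSingleton_apply, Finset.smul_sum,
    Finsupp.smul_single, smul_eq_mul, mul_one]

theorem psiMap_comp_psiMap_eq_id {v w : Finset V → F} (hvw : ∀ s ∈ K.faces, w s * v s = 1)
    (n : ℕ) : psiMap K v n ∘ₗ psiMap K w n = LinearMap.id := by
  refine Finsupp.lhom_ext fun σ a => ?_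
  simp only [LinearMap.comp_apply, psiMap_single, LinearMap.id_apply, mul_assoc,
    ← mul_inv, hvw _ σ.2.1, inv_one, mul_one]

noncomputable def psiEquiv (w : Finset V → F) (hw0 : ∀ s ∈ K.faces, w s ≠ 0) (n : ℕ) :
    (K.SimplexOf n →₀ F) ≃ₗ[F] (K.SimplexOf n →₀ F) :=
  LinearEquiv.ofLinearMap (psiMap K w n) (psiMap K (fun s => (w s)⁻¹) n)
    (psiMap_comp_psiMap_eq_id K (fun s hs => inv_mul_cancel₀ (hw0 s hs)) n)
    (psiMap_comp_psiMap_eq_id K (fun s hs => mul_inv_cancel₀ (hw0 s hs)) n)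

theorem fbnd_comp_psiMap (w : Finset V → F) (hw0 : ∀ s ∈ K.faces, w s ≠ 0) (n : ℕ) :
    fbnd K w n ∘ₗ psiMap K w (n + 1) = psiMap K w n ∘ₗ fbnd K (fun _ => 1) n := by
  refine Finsupp.lhom_ext fun σ a => ?_
  simp only [LinearMap.comp_apply, psiMap_single, fbnd_single, map_sum]
  refine Finset.sum_congr rfl fun i _ => congrArg _ ?_
  field_simp [hw0 _ σ.2.1]

end Weighted

/-- Let `(K, w)` be a weighted simplicial complex over a field `F`
with all weights nonzero.  The map `ψ (Σ aᵢ σᵢ) = Σ (aᵢ / w σᵢ) σᵢ` is an `F`-linear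
isomorphism from `ker ∂` (ordinary boundary, weight `1`) onto `ker ∂_w` (weighted
boundary): it is injective and carries `ker ∂` exactly onto `ker ∂_w`. -/
theorem psi_iso_ker_boundary_ker_weighted_boundary {V F : Type*} [LinearOrder V] [Field F]
    (K : SComplex V) (w : Finset V → F) (hw0 : ∀ s ∈ K.faces, w s ≠ 0) (n : ℕ) :
    Function.Injective ⇑(psiMap K w (n + 1)) ∧
    Submodule.map (psiMap K w (n + 1)) (LinearMap.ker (fbnd K (fun _ => (1 : F)) n)) =
      LinearMap.ker (fbnd K w n) :=
  ⟨(psiEquiv K w hw0 (n + 1)).injective,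
    LinearEquiv.map_ker_eq_ker_of_comp_eq (psiEquiv K w hw0 (n + 1)) (psiEquiv K w hw0 n)
      (fbnd_comp_psiMap K w hw0 n)⟩
end

section
/- Let (K,w) be a WSC with all weights nonzero, over a field 𝔽. Then im ∂ ≅ im ∂_w as 𝔽-vector spaces, where ∂ and ∂_w are the unweighted and weighted boundary maps C_n(K;𝔽) → C_{n-1}(K;𝔽). -/
open Finset

/-! Let `D_m` be the diagonal rescaling `σ ↦ w(σ) σ` of `m`-chains. Then `D_n ∘ ∂_w = ∂ ∘ D_(n+1)`:
in both, the coefficient of `dᵢσ` in the image of `σ` is `(-1)ⁱ w(σ)`. When no weight vanishes the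
`D_m` are isomorphisms, so `D_n` carries `im ∂_w` onto `im ∂`. -/

namespace LinearMap

variable {R M₁ M₂ N₁ N₂ : Type*} [Ring R] [AddCommGroup M₁] [AddCommGroup M₂]
  [AddCommGroup N₁] [AddCommGroup N₂] [Module R M₁] [Module R M₂] [Module R N₁] [Module R N₂]

def rangeEquivOfComp {f : M₁ →ₗ[R] M₂} {g : N₁ →ₗ[R] N₂} (e₁ : M₁ ≃ₗ[R] N₁)
    (e₂ : M₂ ≃ₗ[R] N₂) (h : e₂.toLinearMap ∘ₗ f = g ∘ₗ e₁.toLinearMap) :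
    range f ≃ₗ[R] range g :=
  (e₂.submoduleMap (range f)).trans <| LinearEquiv.ofEq _ _ <| by
    rw [← range_comp, h, range_comp_of_range_eq_top _ e₁.range]

end LinearMap

namespace SComplex

variable {V F : Type*} [Field F] (K : SComplex V) (w : Finset V → F)
  (hw : ∀ s ∈ K.faces, w s ≠ 0)

noncomputable def weightScaling (m : ℕ) : (K.SimplexOf m →₀ F) ≃ₗ[F] (K.SimplexOf m →₀ F) :=
  (Finsupp.basisSingleOne.unitsSMul fun σ => Units.mk0 (w σ.1) (hw σ.1 σ.2.1)).repr.symm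

@[simp]
lemma weightScaling_single {m : ℕ} (σ : K.SimplexOf m) (c : F) :
    K.weightScaling w hw m (Finsupp.single σ c) = Finsupp.single σ (c * w σ.1) := by
  simp [weightScaling, Module.Basis.unitsSMul_apply, Finsupp.smul_single]

lemma weightScaling_comp_fbnd [LinearOrder V] (n : ℕ) :
    (K.weightScaling w hw n).toLinearMap ∘ₗ fbnd K w n =
      fbnd K (fun _ => 1) n ∘ₗ (K.weightScaling w hw (n + 1)).toLinearMap := by
  refine Finsupp.lhom_ext fun σ c => ?_
  simp only [LinearMap.comp_apply, LinearEquiv.coe_coe, weightScaling_single, fbnd,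
    Finsupp.lsum_single, LinearMap.toSpanSingleton_apply, Finset.smul_sum, Finsupp.smul_single,
    smul_eq_mul, map_sum]
  refine Finset.sum_congr rfl fun i _ => ?_
  have hface : w (K.face σ i).1 ≠ 0 := hw _ (K.face σ i).2.1
  congr 1
  field_simp

end SComplex

/-- Let `(K, w)` be a weighted simplicial complex over a field `F`
with all weights nonzero.  Then `im ∂ ≅ im ∂_w` as `F`-vector spaces, where `∂` is the
ordinary (weight-`1`) boundary map and `∂_w` the weighted boundary map. -/
theorem image_boundary_iso_image_weighted_boundary {V F : Type*} [LinearOrder V] [Field F]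
    (K : SComplex V) (w : Finset V → F) (hw0 : ∀ s ∈ K.faces, w s ≠ 0) (n : ℕ) :
    Nonempty (↥(LinearMap.range (fbnd K (fun _ => (1 : F)) n)) ≃ₗ[F]
      ↥(LinearMap.range (fbnd K w n))) :=
  ⟨(LinearMap.rangeEquivOfComp _ _ (K.weightScaling_comp_fbnd w hw0 n)).symm⟩
end

section
/- Let (K,w) be a finite WSC with all weights nonzero, over a field 𝔽 (weights in 𝔽 and coefficients in 𝔽). Then the weighted homology H_n(K,w;𝔽) is isomorphic to the ordinary simplicial homology H_n(K;𝔽) for all n. -/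
open Finset

/-- The cycles of the weighted chain complex over a field. -/
noncomputable def fZ {V F : Type*} [LinearOrder V] [Field F]
    (K : SComplex V) (w : Finset V → F) :
    (n : ℕ) → Submodule F (K.SimplexOf n →₀ F)
  | 0 => ⊤
  | n + 1 => LinearMap.ker (fbnd K w n)

/-- The weighted homology `Hₙ(K, w; F) = ker ∂_{w,n} / im ∂_{w,n+1}` over a field `F`. -/
noncomputable abbrev fH {V F : Type*} [LinearOrder V] [Field F]
    (K : SComplex V) (w : Finset V → F) (n : ℕ) :=
  letI : AddCommGroup ↥(fZ K w n) := inferInstance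
  fZ K w n ⧸ Submodule.comap (fZ K w n).subtype (LinearMap.range (fbnd K w n))

/-!
Rescaling each `n`-simplex `σ` by its weight, `σ ↦ w σ • σ`, turns the weighted boundary
`∂_w σ = Σᵢ (w σ / w (dᵢ σ)) (-1)ⁱ dᵢ σ` into `w σ • ∂ σ`, i.e. it is a chain map from the
weighted to the ordinary chain complex. Its inverse rescales by `(w σ)⁻¹`, so it is a chain
isomorphism and induces isomorphisms on homology.
-/

section Rescale

variable {ι R : Type*} [CommSemiring R]

noncomputable def Finsupp.rescale (c : ι → R) : (ι →₀ R) →ₗ[R] (ι →₀ R) :=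
  Finsupp.lsum R fun i => c i • Finsupp.lsingle i

@[simp]
theorem Finsupp.rescale_single (c : ι → R) (i : ι) (a : R) :
    Finsupp.rescale c (Finsupp.single i a) = Finsupp.single i (c i * a) := by
  simp [Finsupp.rescale, Finsupp.smul_single]

theorem Finsupp.rescale_comp_rescale (c d : ι → R) :
    Finsupp.rescale c ∘ₗ Finsupp.rescale d = Finsupp.rescale (c * d) :=
  Finsupp.lhom_ext fun i a => by
    simp only [LinearMap.comp_apply, Finsupp.rescale_single, Pi.mul_apply, mul_assoc]

theorem Finsupp.rescale_one : Finsupp.rescale (1 : ι → R) = LinearMap.id :=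
  Finsupp.lhom_ext fun i a => by simp

noncomputable def Finsupp.rescaleEquiv (c : ι → Rˣ) : (ι →₀ R) ≃ₗ[R] (ι →₀ R) :=
  LinearEquiv.ofLinearMap (Finsupp.rescale fun i => (c i : R))
    (Finsupp.rescale fun i => ((c i)⁻¹ : Rˣ))
    (by rw [Finsupp.rescale_comp_rescale, ← Finsupp.rescale_one]; congr; ext; simp)
    (by rw [Finsupp.rescale_comp_rescale, ← Finsupp.rescale_one]; congr; ext; simp)

@[simp]
theorem Finsupp.toLinearMap_rescaleEquiv (c : ι → Rˣ) :
    (Finsupp.rescaleEquiv c).toLinearMap = Finsupp.rescale fun i => (c i : R) :=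
  rfl

end Rescale

section ChainIso

variable {R M₀ M₁ N₀ N₁ : Type*} [Semiring R]
  [AddCommMonoid M₀] [Module R M₀] [AddCommMonoid M₁] [Module R M₁]
  [AddCommMonoid N₀] [Module R N₀] [AddCommMonoid N₁] [Module R N₁]
  {d : M₁ →ₗ[R] M₀} {d' : N₁ →ₗ[R] N₀} {e₀ : M₀ ≃ₗ[R] N₀} {e₁ : M₁ ≃ₗ[R] N₁}

theorem map_ker_eq_ker_of_comp_eq (h : e₀.toLinearMap ∘ₗ d = d' ∘ₗ e₁.toLinearMap) :
    (LinearMap.ker d).map e₁.toLinearMap = LinearMap.ker d' := by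
  have hd' : d' = e₀.toLinearMap ∘ₗ d ∘ₗ e₁.symm.toLinearMap := by
    ext x
    simpa using (LinearMap.congr_fun h (e₁.symm x)).symm
  rw [Submodule.map_equiv_eq_comap_symm, hd', LinearEquiv.ker_comp, LinearMap.ker_comp]

theorem map_range_eq_range_of_comp_eq (h : e₀.toLinearMap ∘ₗ d = d' ∘ₗ e₁.toLinearMap) :
    (LinearMap.range d).map e₀.toLinearMap = LinearMap.range d' := by
  rw [← LinearMap.range_comp, h, LinearMap.range_comp, LinearEquiv.range, Submodule.map_top]

end ChainIso

noncomputable def Submodule.subquotientEquiv {R M N : Type*} [Ring R]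
    [AddCommGroup M] [Module R M] [AddCommGroup N] [Module R N] (e : M ≃ₗ[R] N)
    {Z B : Submodule R M} {Z' B' : Submodule R N}
    (hZ : Z.map e.toLinearMap = Z') (hB : B.map e.toLinearMap = B') :
    (Z ⧸ B.comap Z.subtype) ≃ₗ[R] (Z' ⧸ B'.comap Z'.subtype) :=
  Submodule.Quotient.equiv _ _ (e.ofSubmodules Z Z' hZ) <| by
    ext y
    rw [Submodule.map_equiv_eq_comap_symm, Submodule.mem_comap, Submodule.mem_comap,
      Submodule.mem_comap, ← hB, Submodule.map_equiv_eq_comap_symm, Submodule.mem_comap]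
    rfl

section Weighted

variable {V F : Type*} [LinearOrder V] [Field F]

noncomputable def weightEquiv (K : SComplex V) (w : Finset V → F)
    (hw0 : ∀ s ∈ K.faces, w s ≠ 0) (n : ℕ) :
    (K.SimplexOf n →₀ F) ≃ₗ[F] (K.SimplexOf n →₀ F) :=
  Finsupp.rescaleEquiv fun σ => Units.mk0 (w σ.1) (hw0 _ σ.2.1)

theorem weightEquiv_comp_fbnd (K : SComplex V) (w : Finset V → F)
    (hw0 : ∀ s ∈ K.faces, w s ≠ 0) (n : ℕ) :
    (weightEquiv K w hw0 n).toLinearMap ∘ₗ fbnd K w n =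
      fbnd K (fun _ => 1) n ∘ₗ (weightEquiv K w hw0 (n + 1)).toLinearMap := by
  refine Finsupp.lhom_ext fun σ a => ?_
  simp only [weightEquiv, fbnd, LinearMap.comp_apply, Finsupp.toLinearMap_rescaleEquiv,
    Finsupp.rescale_single, Finsupp.lsum_single, LinearMap.toSpanSingleton_apply, map_smul,
    map_sum, Units.val_mk0, div_one, Finset.smul_sum]
  refine Finset.sum_congr rfl fun i _ => ?_
  simp only [Finsupp.smul_single, smul_eq_mul]
  congr 1
  field_simp [hw0 _ (K.face σ i).2.1]

theorem map_weightEquiv_fZ (K : SComplex V) (w : Finset V → F)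
    (hw0 : ∀ s ∈ K.faces, w s ≠ 0) : ∀ n,
    (fZ K w n).map (weightEquiv K w hw0 n).toLinearMap = fZ K (fun _ => 1) n
  | 0 => by rw [fZ, fZ, Submodule.map_top, LinearEquiv.range]
  | n + 1 => map_ker_eq_ker_of_comp_eq (weightEquiv_comp_fbnd K w hw0 n)

end Weighted

theorem weighted_homology_iso_ordinary_over_field_general {V F : Type*} [LinearOrder V] [Field F]
    (K : SComplex V)
    (w : Finset V → F) (hw0 : ∀ s ∈ K.faces, w s ≠ 0) (n : ℕ) :
    Nonempty (fH K w n ≃ₗ[F] fH K (fun _ => (1 : F)) n) :=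
  ⟨Submodule.subquotientEquiv (weightEquiv K w hw0 n) (map_weightEquiv_fZ K w hw0 n)
    (map_range_eq_range_of_comp_eq (weightEquiv_comp_fbnd K w hw0 n))⟩

/-- Let `(K, w)` be a finite weighted simplicial complex with nonzero
weights in a field `F`.  Then the weighted homology `Hₙ(K, w; F)` is isomorphic to the
ordinary simplicial homology `Hₙ(K; F)` (weighted homology with constant weight `1`)
for all `n`. -/
theorem weighted_homology_iso_ordinary_over_field {V F : Type*} [LinearOrder V] [Field F]
    (K : SComplex V) (hfin : K.faces.Finite)
    (w : Finset V → F) (hw0 : ∀ s ∈ K.faces, w s ≠ 0) (n : ℕ) :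
    Nonempty (fH K w n ≃ₗ[F] fH K (fun _ => (1 : F)) n) :=
  weighted_homology_iso_ordinary_over_field_general K w hw0 n
end
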